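/- Let Upd satisfy P1, P2, and P6''. For all disjoint events A, B with A, B ⊆ C ⊊ W, every probability measure Pr with Pr(B) > 0 and Pr(C) > 0, and every Pr' ∈ Upd(Pr,C), there exists Pr'' ∈ Upd(Pr,C) such that Pr''(A) = Pr'(A) and Pr''(B) = (1 − Pr'(A))·Pr(B|C−A). -/

import Mathlib

open MeasureTheory ProbabilityTheory Set
open scoped Classical NNReal ENNReal

noncomputable section

/-- A family of update functions, one for each measure space. -/
abbrev UpdFamily : Type 1 :=
  ∀ (W : Type) [MeasurableSpace W],
    Set (ProbabilityMeasure W) → Set W → Set (ProbabilityMeasure W)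

/-- Base condition: `Upd(X,B) = ∅` whenever every measure in `X` gives `B` probability 0. -/
def UpdBase (U : UpdFamily) : Prop :=
  ∀ (W : Type) [MeasurableSpace W] (X : Set (ProbabilityMeasure W)) (B : Set W),
    (∀ μ ∈ X, μ B = 0) → U W X B = ∅

/-- The conditional probability `Pr(A|B) = Pr(A ∩ B)/Pr(B)`. -/
def condProb {W : Type} [MeasurableSpace W] (μ : ProbabilityMeasure W) (A B : Set W) : ℝ≥0 :=
  μ (A ∩ B) / μ B

/-- The conditional probability measure `Pr(·|B)` (defined when `Pr(B) > 0`). -/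
def condPM {W : Type} [MeasurableSpace W] (μ : ProbabilityMeasure W) (B : Set W) :
    ProbabilityMeasure W :=
  if h : (μ : Measure W) B ≠ 0 then
    ⟨(μ : Measure W)[|B], cond_isProbabilityMeasure h⟩
  else μ

/-- Pushforward of a probability measure along a measurable map (`f*`). -/
def pushPM {W W' : Type} [MeasurableSpace W] [MeasurableSpace W']
    {f : W → W'} (hf : Measurable f) (μ : ProbabilityMeasure W) : ProbabilityMeasure W' :=
  μ.map hf.aemeasurable

/-- P1: every measure in `Upd(X,B)` assigns probability 1 to `B`. -/
def P1 (U : UpdFamily) : Prop :=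
  ∀ (W : Type) [MeasurableSpace W] (X : Set (ProbabilityMeasure W)) (B : Set W),
    MeasurableSet B → ∀ μ ∈ U W X B, μ B = 1

/-- P2: representation independence under measurable surjections. -/
def P2 (U : UpdFamily) : Prop :=
  ∀ (W W' : Type) [MeasurableSpace W] [MeasurableSpace W'] (f : W → W')
    (hf : Measurable f), Function.Surjective f →
    ∀ (X : Set (ProbabilityMeasure W)) (B : Set W'), MeasurableSet B →
      U W' (pushPM hf '' X) B = pushPM hf '' (U W X (f ⁻¹' B))

/-- P3: compositionality of updating. -/
def P3 (U : UpdFamily) : Prop :=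
  ∀ (W : Type) [MeasurableSpace W] (X : Set (ProbabilityMeasure W)) (B C : Set W),
    MeasurableSet B → MeasurableSet C → U W (U W X B) C = U W X (B ∩ C)

/-- P4: trivial update on sure evidence. -/
def P4 (U : UpdFamily) : Prop :=
  ∀ (W : Type) [MeasurableSpace W] (X : Set (ProbabilityMeasure W)) (B : Set W),
    MeasurableSet B → (∀ μ ∈ X, μ B = 1) → U W X B = X

/-- P5: pointwise union decomposition. -/
def P5 (U : UpdFamily) : Prop :=
  ∀ (W : Type) [MeasurableSpace W] (X : Set (ProbabilityMeasure W)) (B : Set W),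
    MeasurableSet B → U W X B = ⋃ μ ∈ X, U W {μ} B

/-- P6': singleton inputs yield at most one output measure. -/
def P6' (U : UpdFamily) : Prop :=
  ∀ (W : Type) [MeasurableSpace W] (μ : ProbabilityMeasure W) (B : Set W),
    MeasurableSet B → (U W {μ} B).Subsingleton

/-- P6'': bounded amplification relative to conditioning. -/
def P6'' (U : UpdFamily) : Prop :=
  ∀ (W : Type) [MeasurableSpace W] (μ : ProbabilityMeasure W), ∃ c : ℝ≥0,
    ∀ (A B : Set W), MeasurableSet A → MeasurableSet B →
      ∀ ν ∈ U W {μ} B, ν A ≤ c * condProb μ A B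

/-- P6: either P6' or P6'' holds. -/
def P6 (U : UpdFamily) : Prop := P6' U ∨ P6'' U

/-- P7: some non-sure evidence yields a nonempty update. -/
def P7 (U : UpdFamily) : Prop :=
  ∃ (W : Type) (_ : MeasurableSpace W) (X : Set (ProbabilityMeasure W)) (B : Set W),
    MeasurableSet B ∧ (∀ μ ∈ X, μ B ≠ 1) ∧ U W X B ≠ ∅

/-- Conditioning: `Upd_cond(X,B) = {Pr(·|B) : Pr ∈ X, Pr(B) > 0}`. -/
def updCond {W : Type} [MeasurableSpace W] (X : Set (ProbabilityMeasure W)) (B : Set W) :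
    Set (ProbabilityMeasure W) :=
  {ν | ∃ μ ∈ X, 0 < μ B ∧ ν = condPM μ B}

/-- Constraining: `Upd_constrain(X,B) = {Pr ∈ X : Pr(B) = 1}`. -/
def updConstrain {W : Type} [MeasurableSpace W] (X : Set (ProbabilityMeasure W)) (B : Set W) :
    Set (ProbabilityMeasure W) := {μ ∈ X | μ B = 1}

end

/-!
Extend `Pr` to `W × W × W × 𝕋` by independent samples from `Pr(·|B)`, `Pr(·|(C−A)−B)` and a
uniform point of the circle `𝕋 = ℝ/ℤ`, and lift `Pr'` along the first projection (P2).
Resampling on `C − A` (take the `B`-sample when the circle point lies in a set `E` of measure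
`Pr(B|C−A)`, the other sample otherwise) pushes the extension back to `Pr` and fixes the
preimages of `A` and `C`, so P2 turns the lift into a measure in `Upd(Pr, C)` that agrees with
`Pr'` on `A` and gives `B` the lifted mass of `{first coordinate ∈ C − A, circle point ∈ E}`.
By P6'' the lift has bounded density, so this mass depends continuously on translating `E`; its
average over all translates is `Pr(B|C−A) (1 − Pr'(A))` by P1, hence some translate attains it.
-/

open Filter Topology
open scoped symmDiff

section Translates

theorem exists_eq_lintegral_of_continuous {X : Type*} [TopologicalSpace X] [PreconnectedSpace X]
    [MeasurableSpace X] [OpensMeasurableSpace X] (μ : Measure X) [IsProbabilityMeasure μ]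
    {f : X → ℝ≥0∞} (hf : Continuous f) (hint : ∫⁻ x, f x ∂μ ≠ ∞) :
    ∃ x, f x = ∫⁻ x, f x ∂μ := by
  obtain ⟨a, ha⟩ := exists_le_lintegral hf.measurable.aemeasurable (μ := μ)
  obtain ⟨b, hb⟩ := exists_lintegral_le hint (μ := μ)
  exact intermediate_value_univ a b hf ⟨ha, hb⟩

variable {G : Type*} [AddCommGroup G] [MeasurableSpace G]

theorem lintegral_measure_preimage_add [MeasurableAdd₂ G] (μ : Measure G) [SFinite μ]
    [μ.IsAddLeftInvariant] (m : Measure G) [SFinite m] {E : Set G} (hE : MeasurableSet E) :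
    ∫⁻ y, m ((· + y) ⁻¹' E) ∂μ = μ E * m univ := by
  have hS : MeasurableSet {p : G × G | p.2 + p.1 ∈ E} := (measurable_snd.add measurable_fst) hE
  calc ∫⁻ y, m ((· + y) ⁻¹' E) ∂μ = (μ.prod m) {p : G × G | p.2 + p.1 ∈ E} :=
        (Measure.prod_apply hS).symm
    _ = ∫⁻ x, μ ((x + ·) ⁻¹' E) ∂m := Measure.prod_apply_symm hS
    _ = μ E * m univ := by simp_rw [measure_preimage_add]; exact lintegral_const _

variable [TopologicalSpace G] [IsTopologicalAddGroup G] [BorelSpace G]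

theorem continuous_measure_preimage_add (μ : Measure G) [IsFiniteMeasure μ]
    [μ.IsAddRightInvariant] [μ.InnerRegularCompactLTTop] {m : Measure G} [IsFiniteMeasure m]
    {K : ℝ≥0} (hm : m ≤ K • μ) {E : Set G} (hE : MeasurableSet E) :
    Continuous fun y => m ((· + y) ⁻¹' E) := by
  let τ : G → C(G, G) := fun y => ⟨(· + y), continuous_add_const y⟩
  have hτ : Continuous τ :=
    ContinuousMap.continuous_of_continuous_uncurry _ (continuous_snd.add continuous_fst)
  refine continuous_iff_continuousAt.2 fun y₀ => ?_
  have hsd : Tendsto (fun y => μ (((· + y) ⁻¹' E) ∆ ((· + y₀) ⁻¹' E))) (𝓝 y₀) (𝓝 0) := by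
    simpa only [τ, ContinuousMap.coe_mk] using tendsto_measure_symmDiff_preimage_nhds_zero
      (hτ.tendsto y₀) (Eventually.of_forall fun y => measurePreserving_add_right μ y)
      (measurePreserving_add_right μ y₀) hE.nullMeasurableSet (measure_ne_top _ _)
  have hd : Tendsto (fun y => (K : ℝ≥0∞) * μ (((· + y) ⁻¹' E) ∆ ((· + y₀) ⁻¹' E))) (𝓝 y₀)
      (𝓝 0) := by
    simpa using ENNReal.Tendsto.const_mul hsd (Or.inr ENNReal.coe_ne_top)
  have hmd : ∀ s t : Set G, m s ≤ m t + K * μ (s ∆ t) := fun s t =>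
    tsub_le_iff_left.1 (le_measure_symmDiff.trans (hm _))
  refine tendsto_of_tendsto_of_tendsto_of_le_of_le
    (by simpa using ENNReal.Tendsto.sub tendsto_const_nhds hd (Or.inl (measure_ne_top _ _)))
    (by simpa using tendsto_const_nhds.add hd) (fun y => ?_) (fun y => hmd _ _)
  rw [tsub_le_iff_left, add_comm, symmDiff_comm]
  exact hmd _ _

theorem exists_measure_preimage_add_eq_mul [ConnectedSpace G] [MeasurableAdd₂ G]
    (μ : Measure G) [IsProbabilityMeasure μ] [μ.IsAddLeftInvariant] [μ.InnerRegularCompactLTTop]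
    {m : Measure G} [IsFiniteMeasure m] {K : ℝ≥0} (hm : m ≤ K • μ) {E : Set G}
    (hE : MeasurableSet E) : ∃ y, m ((· + y) ⁻¹' E) = μ E * m univ := by
  rw [← lintegral_measure_preimage_add μ m hE]
  refine exists_eq_lintegral_of_continuous μ (continuous_measure_preimage_add μ hm hE) ?_
  rw [lintegral_measure_preimage_add μ m hE]
  exact ENNReal.mul_ne_top (measure_ne_top _ _) (measure_ne_top _ _)

end Translates

namespace UnitAddCircle

instance isProbabilityMeasure_volume : IsProbabilityMeasure (volume : Measure UnitAddCircle) :=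
  ⟨UnitAddCircle.measure_univ⟩

theorem exists_volume_eq_measure_eq_mul {m : Measure UnitAddCircle} [IsFiniteMeasure m]
    {K : ℝ≥0} (hm : m ≤ K • volume) {b : ℝ≥0} (hb : b ≤ 1) :
    ∃ E : Set UnitAddCircle, MeasurableSet E ∧ volume E = b ∧ m E = b * m univ := by
  have hball : volume (Metric.closedBall (0 : UnitAddCircle) (b / 2)) = b := by
    rw [AddCircle.volume_closedBall, mul_div_cancel₀ _ two_ne_zero,
      min_eq_right (by exact_mod_cast hb), ENNReal.ofReal_coe_nnreal]
  have hmeas : MeasurableSet (Metric.closedBall (0 : UnitAddCircle) (b / 2)) :=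
    Metric.isClosed_closedBall.measurableSet
  obtain ⟨y, hy⟩ := exists_measure_preimage_add_eq_mul volume hm hmeas
  refine ⟨_, measurable_add_const y hmeas, ?_, ?_⟩
  · rw [measure_preimage_add_right, hball]
  · rw [hy, hball]

theorem exists_volume_eq_measure_inter_preimage_eq_mul {X : Type} [MeasurableSpace X]
    {Q μ : Measure X} [IsFiniteMeasure Q] {K : ℝ≥0} (hQ : Q ≤ K • μ) {π : X → UnitAddCircle}
    (hπ : Measurable π) (hμπ : μ.map π = volume) (S : Set X) {b : ℝ≥0} (hb : b ≤ 1) :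
    ∃ E : Set UnitAddCircle, MeasurableSet E ∧ volume E = b ∧ Q (S ∩ π ⁻¹' E) = b * Q S := by
  have hm : (Q.restrict S).map π ≤ K • volume :=
    calc (Q.restrict S).map π ≤ Q.map π := Measure.map_mono Measure.restrict_le_self hπ
      _ ≤ (K • μ).map π := Measure.map_mono hQ hπ
      _ = K • volume := by rw [Measure.map_smul, hμπ]
  obtain ⟨E, hE, hvol, hmE⟩ := exists_volume_eq_measure_eq_mul hm hb
  refine ⟨E, hE, hvol, ?_⟩
  rwa [Measure.map_apply hπ hE, Measure.map_apply hπ MeasurableSet.univ, preimage_univ,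
    Measure.restrict_apply_univ, Measure.restrict_apply (hπ hE), inter_comm] at hmE

end UnitAddCircle

section PushforwardConditioning

variable {W : Type} [MeasurableSpace W]

theorem pushPM_apply {W' : Type} [MeasurableSpace W'] {f : W → W'} (hf : Measurable f)
    (μ : ProbabilityMeasure W) {s : Set W'} (hs : MeasurableSet s) :
    pushPM hf μ s = μ (f ⁻¹' s) :=
  ProbabilityMeasure.map_apply μ hf.aemeasurable hs

theorem condPM_apply_mul (μ : ProbabilityMeasure W) {s : Set W} (hs : MeasurableSet s)
    (t : Set W) : (condPM μ s : Measure W) t * (μ : Measure W) s = (μ : Measure W) (s ∩ t) := by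
  by_cases h : (μ : Measure W) s = 0
  · simp [h, measure_inter_null_of_null_left]
  · rw [show (condPM μ s : Measure W) = (μ : Measure W)[|s] by simp [condPM, h]]
    exact cond_mul_eq_inter hs t (μ : Measure W)

theorem condProb_le_one (μ : ProbabilityMeasure W) (s t : Set W) : condProb μ s t ≤ 1 :=
  div_le_one_of_le₀ (μ.apply_mono inter_subset_right) (by positivity)

theorem condProb_mul_of_subset (μ : ProbabilityMeasure W) {s t : Set W} (h : s ⊆ t) :
    (condProb μ s t : ℝ≥0∞) * (μ : Measure W) t = (μ : Measure W) s := by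
  rw [← ProbabilityMeasure.ennreal_coeFn_eq_coeFn_toMeasure,
    ← ProbabilityMeasure.ennreal_coeFn_eq_coeFn_toMeasure, ← ENNReal.coe_mul, ENNReal.coe_inj,
    condProb, inter_eq_left.2 h]
  rcases eq_or_ne (μ t) 0 with ht | ht
  · rw [ht, mul_zero, eq_comm, ← nonpos_iff_eq_zero, ← ht]
    exact μ.apply_mono h
  · exact div_mul_cancel₀ _ ht

end PushforwardConditioning

section Axioms

variable {U : UpdFamily} {Ω W : Type} [MeasurableSpace Ω] [MeasurableSpace W]

theorem P1.measure_preimage_sdiff (h1 : P1 U) {f : Ω → W} (hf : Measurable f)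
    {μ Q : ProbabilityMeasure Ω} {A C : Set W} (hA : MeasurableSet A) (hC : MeasurableSet C)
    (hAC : A ⊆ C) (hQ : Q ∈ U Ω {μ} (f ⁻¹' C)) :
    (Q : Measure Ω) (f ⁻¹' (C \ A)) = 1 - pushPM hf Q A := by
  rw [preimage_sdiff, measure_sdiff (preimage_mono hAC) (hf hA).nullMeasurableSet
      (measure_ne_top _ _), ← ProbabilityMeasure.ennreal_coeFn_eq_coeFn_toMeasure,
    h1 Ω {μ} _ (hf hC) Q hQ, pushPM_apply hf Q hA,
    ProbabilityMeasure.ennreal_coeFn_eq_coeFn_toMeasure, ENNReal.coe_one]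

theorem P2.upd_singleton_eq_image (h2 : P2 U) {f : Ω → W} (hf : Measurable f)
    (hfs : Function.Surjective f) {μ : ProbabilityMeasure Ω} {ν : ProbabilityMeasure W}
    (hμν : pushPM hf μ = ν) {C : Set W} (hC : MeasurableSet C) :
    U W {ν} C = pushPM hf '' U Ω {μ} (f ⁻¹' C) := by
  rw [← hμν, ← image_singleton]
  exact h2 Ω W f hf hfs {μ} C hC

theorem P6''.exists_le_smul (h6 : P6'' U) (μ : ProbabilityMeasure W) {S : Set W}
    (hS : MeasurableSet S) : ∃ K : ℝ≥0, ∀ ν ∈ U W {μ} S, (ν : Measure W) ≤ K • (μ : Measure W) := by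
  obtain ⟨c, hc⟩ := h6 W μ
  refine ⟨c / μ S, fun ν hν => Measure.le_iff.2 fun N hN => ?_⟩
  have hle : ν N ≤ c / μ S * μ N :=
    calc ν N ≤ c * condProb μ N S := hc N S hN hS ν hν
      _ ≤ c * (μ N / μ S) := by
        unfold condProb
        gcongr
        exact inter_subset_left
      _ = c / μ S * μ N := by rw [div_mul_eq_mul_div, mul_div_assoc]
  rw [Measure.smul_apply, ENNReal.smul_def, smul_eq_mul,
    ← ProbabilityMeasure.ennreal_coeFn_eq_coeFn_toMeasure,
    ← ProbabilityMeasure.ennreal_coeFn_eq_coeFn_toMeasure, ← ENNReal.coe_mul]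
  exact_mod_cast hle

end Axioms

noncomputable section Resampling

variable {W T : Type} {P B : Set W} {E : Set T}

/-- Inside `P`, the first coordinate is replaced by the `B`-sample when the coin lands in `E`
and by the `P \ B`-sample otherwise; falling back to the first coordinate keeps the value in `P`,
so preimages of sets containing or avoiding `P` are those of `Prod.fst`. -/
def resample (P B : Set W) (E : Set T) (p : W × W × W × T) : W :=
  if p.1 ∈ P then
    if p.2.2.2 ∈ E then (if p.2.1 ∈ B then p.2.1 else p.1)
    else (if p.2.2.1 ∈ P \ B then p.2.2.1 else p.1)
  else p.1

theorem resample_surjective [Nonempty T] : Function.Surjective (resample P B E) := by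
  refine fun w => ⟨(w, w, w, Classical.arbitrary T), ?_⟩
  simp only [resample]
  split_ifs <;> rfl

theorem preimage_resample (hBP : B ⊆ P) {S : Set W} (hS : P ⊆ S ∨ Disjoint P S) :
    resample P B E ⁻¹' S = Prod.fst ⁻¹' S := by
  ext p
  simp only [mem_preimage]
  by_cases hp : p.1 ∈ P
  · have hmem : resample P B E p ∈ P := by
      simp only [resample]
      split_ifs <;> first | exact hp | exact hBP ‹_› | exact (‹p.2.2.1 ∈ P \ B›).1
    rcases hS with hS | hS
    · exact iff_of_true (hS hmem) (hS hp)
    · exact iff_of_false (disjoint_left.1 hS hmem) (disjoint_left.1 hS hp)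
  · simp only [resample, if_neg hp]

variable [MeasurableSpace W] [MeasurableSpace T]

def resampleMeasure (Pr : ProbabilityMeasure W) (P B : Set W) (τ : ProbabilityMeasure T) :
    ProbabilityMeasure (W × W × W × T) :=
  Pr.prod ((condPM Pr B).prod ((condPM Pr (P \ B)).prod τ))

theorem measurable_resample (hP : MeasurableSet P) (hB : MeasurableSet B)
    (hE : MeasurableSet E) : Measurable (resample P B E) :=
  Measurable.ite (measurable_fst hP)
    (Measurable.ite (measurable_snd.snd.snd hE)
      (Measurable.ite (measurable_snd.fst hB) measurable_snd.fst measurable_fst)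
      (Measurable.ite (measurable_snd.snd.fst (hP.diff hB)) measurable_snd.snd.fst
        measurable_fst))
    measurable_fst

theorem map_ite_prod (α β : Measure W) [IsProbabilityMeasure α] [IsProbabilityMeasure β]
    (τ : Measure T) [SFinite τ] (hE : MeasurableSet E) :
    (α.prod (β.prod τ)).map (fun q => if q.2.2 ∈ E then q.1 else q.2.1) =
      τ E • α + τ Eᶜ • β := by
  have hmeas : Measurable fun q : W × W × T => if q.2.2 ∈ E then q.1 else q.2.1 :=
    Measurable.ite (measurable_snd.snd hE) measurable_fst measurable_snd.fst
  ext D hD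
  have hpre : (fun q : W × W × T => if q.2.2 ∈ E then q.1 else q.2.1) ⁻¹' D
      = D ×ˢ univ ×ˢ E ∪ univ ×ˢ D ×ˢ Eᶜ := by
    ext ⟨u, v, t⟩
    by_cases ht : t ∈ E <;> simp [ht]
  have hdisj : Disjoint (D ×ˢ univ ×ˢ E) (univ ×ˢ D ×ˢ Eᶜ) :=
    disjoint_prod.2 (Or.inr (disjoint_prod.2 (Or.inr disjoint_compl_right)))
  rw [Measure.map_apply hmeas hD, hpre,
    measure_union hdisj (MeasurableSet.univ.prod (hD.prod hE.compl)), Measure.prod_prod,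
    Measure.prod_prod, Measure.prod_prod, Measure.prod_prod, measure_univ, measure_univ]
  simp [mul_comm]

variable (Pr : ProbabilityMeasure W) (τ : ProbabilityMeasure T)

theorem toMeasure_resampleMeasure :
    (resampleMeasure Pr P B τ : Measure (W × W × W × T)) = (Pr : Measure W).prod
      ((condPM Pr B : Measure W).prod ((condPM Pr (P \ B) : Measure W).prod (τ : Measure T))) := by
  simp only [resampleMeasure, ProbabilityMeasure.toMeasure_prod]

theorem pushPM_fst_resampleMeasure : pushPM measurable_fst (resampleMeasure Pr P B τ) = Pr :=
  ProbabilityMeasure.map_fst_prod _ _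

theorem map_coin_resampleMeasure :
    (resampleMeasure Pr P B τ : Measure (W × W × W × T)).map (fun p => p.2.2.2) = τ := by
  ext F hF
  rw [Measure.map_apply measurable_snd.snd.snd hF,
    show (fun p : W × W × W × T => p.2.2.2) ⁻¹' F = univ ×ˢ univ ×ˢ univ ×ˢ F by ext; simp,
    toMeasure_resampleMeasure]
  simp [Measure.prod_prod]

variable {Pr τ}

theorem measure_compl_mul (hB : MeasurableSet B) (hBP : B ⊆ P) (hEm : MeasurableSet E)
    (hE : (τ : Measure T) E * (Pr : Measure W) P = (Pr : Measure W) B) :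
    (τ : Measure T) Eᶜ * (Pr : Measure W) P = (Pr : Measure W) (P \ B) := by
  rw [prob_compl_eq_one_sub hEm, ENNReal.sub_mul fun _ _ => measure_ne_top _ _, one_mul, hE,
    measure_sdiff hBP hB.nullMeasurableSet (measure_ne_top _ _)]

theorem ae_resample_sample_mem (hP : MeasurableSet P) (hB : MeasurableSet B) (hBP : B ⊆ P)
    (hEm : MeasurableSet E) (hE : (τ : Measure T) E * (Pr : Measure W) P = (Pr : Measure W) B) :
    ∀ᵐ p ∂(resampleMeasure Pr P B τ : Measure (W × W × W × T)),
      p.1 ∈ P → (p.2.2.2 ∈ E → p.2.1 ∈ B) ∧ (p.2.2.2 ∉ E → p.2.2.1 ∈ P \ B) := by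
  rw [ae_iff]
  refine measure_mono_null (t := P ×ˢ Bᶜ ×ˢ univ ×ˢ E ∪ P ×ˢ univ ×ˢ (P \ B)ᶜ ×ˢ Eᶜ) ?_
    (measure_union_null ?_ ?_)
  · rintro ⟨w, u, v, t⟩
    simp only [mem_ofPred_eq, mem_union, mem_prod, mem_compl_iff, mem_univ, true_and]
    tauto
  all_goals rw [toMeasure_resampleMeasure, Measure.prod_prod, Measure.prod_prod,
    Measure.prod_prod, measure_univ]
  · calc _ = (condPM Pr B : Measure W) Bᶜ * ((τ : Measure T) E * (Pr : Measure W) P) := by ring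
      _ = 0 := by rw [hE, condPM_apply_mul _ hB, inter_compl_self, measure_empty]
  · calc _ = (condPM Pr (P \ B) : Measure W) (P \ B)ᶜ *
          ((τ : Measure T) Eᶜ * (Pr : Measure W) P) := by ring
      _ = 0 := by
        rw [measure_compl_mul hB hBP hEm hE, condPM_apply_mul _ (hP.diff hB), inter_compl_self,
          measure_empty]

theorem pushPM_resample (hP : MeasurableSet P) (hB : MeasurableSet B) (hBP : B ⊆ P)
    (hEm : MeasurableSet E) (hE : (τ : Measure T) E * (Pr : Measure W) P = (Pr : Measure W) B) :
    pushPM (measurable_resample hP hB hEm) (resampleMeasure Pr P B τ) = Pr := by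
  apply ProbabilityMeasure.toMeasure_injective
  rw [pushPM, ProbabilityMeasure.toMeasure_map]
  let mix : W × W × T → W := fun q => if q.2.2 ∈ E then q.1 else q.2.1
  have hmix : Measurable mix :=
    Measurable.ite (measurable_snd.snd hEm) measurable_fst measurable_snd.fst
  have hg : Measurable fun p : W × W × W × T => if p.1 ∈ P then mix p.2 else p.1 :=
    Measurable.ite (measurable_fst hP) (hmix.comp measurable_snd) measurable_fst
  have hae : resample P B E =ᵐ[(resampleMeasure Pr P B τ : Measure (W × W × W × T))]
      fun p => if p.1 ∈ P then mix p.2 else p.1 := by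
    filter_upwards [ae_resample_sample_mem hP hB hBP hEm hE] with p hp
    simp only [resample, mix]
    split_ifs <;> simp_all
  ext D hD
  have hpre : (fun p : W × W × W × T => if p.1 ∈ P then mix p.2 else p.1) ⁻¹' D
      = (D \ P) ×ˢ univ ∪ P ×ˢ (mix ⁻¹' D) := by
    ext ⟨w, q⟩
    by_cases hw : w ∈ P <;> simp [hw]
  have hsplit : (Pr : Measure W) (B ∩ D) + (Pr : Measure W) ((P \ B) ∩ D)
      = (Pr : Measure W) (D ∩ P) := by
    rw [← measure_inter_add_sdiff (D ∩ P) hB]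
    congr 2 <;> ext <;> simp only [mem_inter_iff, Set.mem_sdiff] <;> grind
  rw [Measure.map_congr hae, Measure.map_apply hg hD, hpre,
    measure_union (disjoint_prod.2 (Or.inl disjoint_sdiff_left)) (hP.prod (hmix hD)),
    toMeasure_resampleMeasure, Measure.prod_prod, Measure.prod_prod, measure_univ, mul_one,
    ← Measure.map_apply hmix hD, map_ite_prod _ _ _ hEm]
  calc _ = (Pr : Measure W) (D \ P) +
        ((condPM Pr B : Measure W) D * ((τ : Measure T) E * (Pr : Measure W) P) +
          (condPM Pr (P \ B) : Measure W) D * ((τ : Measure T) Eᶜ * (Pr : Measure W) P)) := by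
        simp only [Measure.add_apply, Measure.smul_apply, smul_eq_mul]
        ring
    _ = (Pr : Measure W) D := by
        rw [hE, measure_compl_mul hB hBP hEm hE, condPM_apply_mul _ hB,
          condPM_apply_mul _ (hP.diff hB), hsplit, measure_sdiff_add_inter D hP]

theorem resample_preimage_ae_eq (hP : MeasurableSet P) (hB : MeasurableSet B) (hBP : B ⊆ P)
    (hEm : MeasurableSet E) (hE : (τ : Measure T) E * (Pr : Measure W) P = (Pr : Measure W) B) :
    resample P B E ⁻¹' B =ᵐ[(resampleMeasure Pr P B τ : Measure (W × W × W × T))]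
      (Prod.fst ⁻¹' P ∩ (fun p : W × W × W × T => p.2.2.2) ⁻¹' E : Set (W × W × W × T)) := by
  refine eventuallyEq_set.2 ?_
  filter_upwards [ae_resample_sample_mem hP hB hBP hEm hE] with p hp
  simp only [resample, mem_preimage, mem_inter_iff]
  split_ifs with hp1 <;> simp_all
  exact fun h => hp1 (hBP h)

end Resampling

theorem stmt19_general (U : UpdFamily) (h1 : P1 U) (h2 : P2 U)
    (h6 : P6'' U)
    (W : Type) [MeasurableSpace W] (A B C : Set W)
    (hA : MeasurableSet A) (hB : MeasurableSet B) (hC : MeasurableSet C)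
    (hdisj : Disjoint A B) (hAC : A ⊆ C) (hBC : B ⊆ C)
    (Pr : ProbabilityMeasure W) :
    ∀ Pr' ∈ U W {Pr} C, ∃ Pr'' ∈ U W {Pr} C,
      Pr'' A = Pr' A ∧ Pr'' B = (1 - Pr' A) * condProb Pr B (C \ A) := by
  intro Pr' hPr'
  have hP : MeasurableSet (C \ A) := hC.diff hA
  have hBP : B ⊆ C \ A := subset_sdiff.2 ⟨hBC, hdisj.symm⟩
  let τ : ProbabilityMeasure UnitAddCircle := ⟨volume, inferInstance⟩
  let μ := resampleMeasure Pr (C \ A) B τ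
  obtain ⟨Q, hQ, rfl⟩ : Pr' ∈ pushPM measurable_fst '' U _ {μ} (Prod.fst ⁻¹' C) := by
    rwa [← h2.upd_singleton_eq_image measurable_fst (fun w => ⟨(w, w, w, 0), rfl⟩)
      (pushPM_fst_resampleMeasure Pr τ) hC]
  obtain ⟨K, hK⟩ := h6.exists_le_smul μ (measurable_fst hC)
  obtain ⟨E, hEm, hEvol, hQE⟩ := UnitAddCircle.exists_volume_eq_measure_inter_preimage_eq_mul
    (hK Q hQ) measurable_snd.snd.snd (map_coin_resampleMeasure Pr τ) (Prod.fst ⁻¹' (C \ A))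
    (condProb_le_one Pr B (C \ A))
  have hE : (τ : Measure UnitAddCircle) E * (Pr : Measure W) (C \ A) = (Pr : Measure W) B := by
    rw [show (τ : Measure UnitAddCircle) = volume from rfl, hEvol]
    exact condProb_mul_of_subset Pr hBP
  have hg := measurable_resample hP hB hEm
  refine ⟨pushPM hg Q, ?_, ?_, ?_⟩
  · rw [h2.upd_singleton_eq_image hg resample_surjective (pushPM_resample hP hB hBP hEm hE) hC,
      preimage_resample hBP (Or.inl sdiff_subset)]
    exact mem_image_of_mem _ hQ
  · rw [pushPM_apply hg _ hA, pushPM_apply measurable_fst _ hA,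
      preimage_resample hBP (Or.inr disjoint_sdiff_left)]
  · apply ENNReal.coe_injective
    rw [pushPM_apply hg _ hB, ProbabilityMeasure.ennreal_coeFn_eq_coeFn_toMeasure,
      measure_congr ((Measure.absolutelyContinuous_of_le_smul (hK Q hQ)).ae_eq
        (resample_preimage_ae_eq hP hB hBP hEm hE)), hQE,
      h1.measure_preimage_sdiff measurable_fst hA hC hAC hQ]
    push_cast
    ring

/-- the averaging lemma, under P1, P2, and P6''. -/
theorem stmt19 (U : UpdFamily) (hbase : UpdBase U) (h1 : P1 U) (h2 : P2 U)
    (h6 : P6'' U)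
    (W : Type) [MeasurableSpace W] (A B C : Set W)
    (hA : MeasurableSet A) (hB : MeasurableSet B) (hC : MeasurableSet C)
    (hdisj : Disjoint A B) (hAC : A ⊆ C) (hBC : B ⊆ C) (hCW : C ≠ Set.univ)
    (Pr : ProbabilityMeasure W) (hBpos : 0 < Pr B) (hCpos : 0 < Pr C) :
    ∀ Pr' ∈ U W {Pr} C, ∃ Pr'' ∈ U W {Pr} C,
      Pr'' A = Pr' A ∧ Pr'' B = (1 - Pr' A) * condProb Pr B (C \ A) :=
  stmt19_general U h1 h2 h6 W A B C hA hB hC hdisj hAC hBC Pr
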